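/- arXiv:1903.03520 — 2 statements merged into one kernel-verified Lean document; each statement's English description precedes it below -/
import Mathlib

section
/- Let x be a string of length at most n over a metric space and let α ≥ 1. Let x' be the string obtained from x by reducing every run of length less than α to length one (leaving runs of length at least α unchanged). Then for any string y of length at most n, dtw(x', y) ≤ dtw(x, y) ≤ α · dtw(x', y). -/
/-!
Every run of `x` is the expansion of the corresponding run of `x' = reduceShortRuns a x`, and a
letter of `x'` is repeated at most `a` times in `x`: a short run of length `m < a` comes from a
single letter, a long run letter by letter. Hence `x` is an expansion of `x'` with all
multiplicities in `[1, a]`.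

Expansions compose, so every correspondence of `(x, y)` is one of `(x', y)`, which gives the
lower bound. Conversely, in a correspondence of `(x', y)` a letter `u` of `x'` is matched with a
block `w` of `y`; in `x` it becomes `m ≤ a` copies of `u`, and matching them with `w` followed by
`m - 1` further copies of its last letter costs at most `m` times the cost of the block.
-/

/-- `xb` is an expansion of `x`: each letter of `x` is duplicated in place a positive
number of times. -/
def IsExpansion {α : Type*} (x xb : List α) : Prop :=
  ∃ ks : List ℕ, ks.length = x.length ∧ (∀ k ∈ ks, 0 < k) ∧
    xb = (List.zipWith (fun a k => List.replicate k a) x ks).flatten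

/-- `(xb, yb)` is a correspondence between `x` and `y`: a pair of equal-length expansions. -/
def IsCorrespondence {α : Type*} (x y xb yb : List α) : Prop :=
  IsExpansion x xb ∧ IsExpansion y yb ∧ xb.length = yb.length

/-- The cost of a correspondence: summed distances of aligned letters. -/
noncomputable def corrCost {α : Type*} (δ : α → α → ℝ) (xb yb : List α) : ℝ :=
  (List.zipWith δ xb yb).sum

/-- Dynamic time warping distance with respect to a distance function `δ`. -/
noncomputable def dtw {α : Type*} (δ : α → α → ℝ) (x y : List α) : ℝ :=
  sInf {c | ∃ xb yb, IsCorrespondence x y xb yb ∧ c = corrCost δ xb yb}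

/-- Generalized Hamming distance on letters. -/
noncomputable def hamDist {α : Type*} [DecidableEq α] (a b : α) : ℝ := if a = b then 0 else 1

/-- DTW over generalized Hamming space. -/
noncomputable def dtw0 {α : Type*} [DecidableEq α] (x y : List α) : ℝ := dtw hamDist x y

/-- Reduce every run of length less than α to length one, leaving longer runs unchanged. -/
noncomputable def reduceShortRuns {α : Type*} [DecidableEq α] (a : ℝ) (x : List α) : List α :=
  ((x.splitBy (fun c d => decide (c = d))).map
    (fun r => if (r.length : ℝ) < a then r.take 1 else r)).flatten

open List

section

variable {α : Type*}

def IsExpansionBy (P : ℕ → Prop) (x xb : List α) : Prop :=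
  ∃ ks : List ℕ, ks.length = x.length ∧ (∀ k ∈ ks, P k) ∧
    xb = (zipWith (fun a k => replicate k a) x ks).flatten

section IsExpansionBy

variable {P Q : ℕ → Prop}

theorem isExpansionBy_nil_iff {xb : List α} : IsExpansionBy P [] xb ↔ xb = [] := by
  constructor
  · rintro ⟨ks, hlen, -, rfl⟩
    rw [length_nil, length_eq_zero_iff] at hlen
    simp [hlen]
  · rintro rfl
    exact ⟨[], rfl, by simp, rfl⟩

theorem isExpansionBy_cons_iff {u : α} {x xb : List α} :
    IsExpansionBy P (u :: x) xb ↔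
      ∃ k xb', P k ∧ IsExpansionBy P x xb' ∧ xb = replicate k u ++ xb' := by
  constructor
  · rintro ⟨_ | ⟨k, ks⟩, hlen, hP, rfl⟩
    · simp at hlen
    · exact ⟨k, _, hP k mem_cons_self, ⟨ks, by simpa using hlen,
        fun j hj => hP j (mem_cons_of_mem k hj), rfl⟩, rfl⟩
  · rintro ⟨k, xb', hk, ⟨ks, hlen, hP, rfl⟩, rfl⟩
    exact ⟨k :: ks, by simp [hlen], forall_mem_cons.mpr ⟨hk, hP⟩, rfl⟩

theorem IsExpansionBy.mono (hPQ : ∀ k, P k → Q k) {x xb : List α} (h : IsExpansionBy P x xb) :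
    IsExpansionBy Q x xb :=
  let ⟨ks, hlen, hP, hxb⟩ := h
  ⟨ks, hlen, fun k hk => hPQ k (hP k hk), hxb⟩

theorem isExpansionBy_self (h1 : P 1) (x : List α) : IsExpansionBy P x x := by
  induction x with
  | nil => exact isExpansionBy_nil_iff.mpr rfl
  | cons u x ih => exact isExpansionBy_cons_iff.mpr ⟨1, x, h1, ih, rfl⟩

theorem isExpansionBy_singleton {u : α} {k : ℕ} (hk : P k) :
    IsExpansionBy P [u] (replicate k u) :=
  isExpansionBy_cons_iff.mpr ⟨k, [], hk, isExpansionBy_nil_iff.mpr rfl, (append_nil _).symm⟩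

theorem IsExpansionBy.append {x₁ x₂ xb₁ xb₂ : List α} (h₁ : IsExpansionBy P x₁ xb₁)
    (h₂ : IsExpansionBy P x₂ xb₂) : IsExpansionBy P (x₁ ++ x₂) (xb₁ ++ xb₂) := by
  induction x₁ generalizing xb₁ with
  | nil => rwa [isExpansionBy_nil_iff.mp h₁]
  | cons u x₁ ih =>
    obtain ⟨k, xb₁', hk, h₁', rfl⟩ := isExpansionBy_cons_iff.mp h₁
    exact isExpansionBy_cons_iff.mpr ⟨k, xb₁' ++ xb₂, hk, ih h₁', append_assoc _ _ _⟩

theorem IsExpansionBy.flatten_map {f : List α → List α} {rs : List (List α)}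
    (h : ∀ r ∈ rs, IsExpansionBy P (f r) r) : IsExpansionBy P (rs.map f).flatten rs.flatten := by
  induction rs with
  | nil => exact isExpansionBy_nil_iff.mpr rfl
  | cons r rs ih =>
    exact (h r mem_cons_self).append (ih fun r' hr' => h r' (mem_cons_of_mem r hr'))

theorem IsExpansionBy.exists_append_eq {x₁ x₂ xb : List α} (h : IsExpansionBy P (x₁ ++ x₂) xb) :
    ∃ xb₁ xb₂, xb = xb₁ ++ xb₂ ∧ IsExpansionBy P x₁ xb₁ ∧ IsExpansionBy P x₂ xb₂ := by
  induction x₁ generalizing xb with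
  | nil => exact ⟨[], xb, rfl, isExpansionBy_nil_iff.mpr rfl, h⟩
  | cons u x₁ ih =>
    obtain ⟨k, xb', hk, h', rfl⟩ := isExpansionBy_cons_iff.mp h
    obtain ⟨xb₁, xb₂, rfl, h₁, h₂⟩ := ih h'
    exact ⟨replicate k u ++ xb₁, xb₂, (append_assoc _ _ _).symm,
      isExpansionBy_cons_iff.mpr ⟨k, xb₁, hk, h₁, rfl⟩, h₂⟩

end IsExpansionBy

section IsExpansion

theorem IsExpansion.append {x₁ x₂ xb₁ xb₂ : List α} (h₁ : IsExpansion x₁ xb₁)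
    (h₂ : IsExpansion x₂ xb₂) : IsExpansion (x₁ ++ x₂) (xb₁ ++ xb₂) :=
  IsExpansionBy.append h₁ h₂

theorem IsExpansion.exists_eq_replicate {u : α} {k : ℕ} {z : List α}
    (h : IsExpansion (replicate k u) z) : ∃ j, k ≤ j ∧ z = replicate j u := by
  induction k generalizing z with
  | zero => exact ⟨0, le_rfl, isExpansionBy_nil_iff.mp h⟩
  | succ k ih =>
    obtain ⟨i, z', hi, h', rfl⟩ := isExpansionBy_cons_iff.mp h
    obtain ⟨j, hkj, rfl⟩ := ih h'
    exact ⟨i + j, by omega, (replicate_add i j u).symm⟩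

theorem IsExpansion.trans {x y z : List α} (h₁ : IsExpansion x y) (h₂ : IsExpansion y z) :
    IsExpansion x z := by
  induction x generalizing y z with
  | nil =>
    obtain rfl := isExpansionBy_nil_iff.mp h₁
    rwa [isExpansionBy_nil_iff.mp h₂]
  | cons u x ih =>
    obtain ⟨k, y', hk, h₁', rfl⟩ := isExpansionBy_cons_iff.mp h₁
    obtain ⟨z₁, z₂, rfl, hz₁, hz₂⟩ := IsExpansionBy.exists_append_eq h₂
    obtain ⟨j, hkj, rfl⟩ := IsExpansion.exists_eq_replicate hz₁
    exact isExpansionBy_cons_iff.mpr ⟨j, z₂, by omega, ih h₁' hz₂, rfl⟩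

theorem isExpansion_replicate {u : α} {m t : ℕ} (hm : 0 < m) (hmt : m ≤ t) :
    IsExpansion (replicate m u) (replicate t u) := by
  have hsplit : ∀ n, 0 < n → replicate n u = replicate (n - 1) u ++ [u] := fun n hn => by
    rw [← replicate_one, ← replicate_add, Nat.sub_add_cancel hn]
  rw [hsplit m hm, show t = m - 1 + (t - m + 1) by omega, replicate_add]
  exact (isExpansionBy_self one_pos _).append (isExpansionBy_singleton (by omega))

theorem isExpansion_append_replicate_getLast {w : List α} (hw : w ≠ []) (j : ℕ) :
    IsExpansion w (w ++ replicate j (w.getLast hw)) := by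
  have h := (isExpansionBy_self one_pos w.dropLast).append
    (isExpansionBy_singleton (u := w.getLast hw) (Nat.succ_pos j))
  rwa [dropLast_append_getLast hw, replicate_succ, ← singleton_append, ← append_assoc,
    dropLast_append_getLast hw] at h

theorem IsCorrespondence.of_isExpansion_left {x' x y xb yb : List α} (hx : IsExpansion x' x)
    (h : IsCorrespondence x y xb yb) : IsCorrespondence x' y xb yb :=
  ⟨hx.trans h.1, h.2⟩

end IsExpansion

section reduceShortRuns

variable [DecidableEq α]

theorem exists_eq_replicate_of_mem_splitBy_eq {r x : List α}
    (hr : r ∈ x.splitBy (fun c d => decide (c = d))) : ∃ u m, 0 < m ∧ r = replicate m u := by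
  obtain ⟨u, r, rfl⟩ := exists_cons_of_ne_nil (ne_nil_of_mem_splitBy hr)
  have hchain : IsChain (· = ·) (u :: r) :=
    (isChain_of_mem_splitBy hr).imp fun _ _ => of_decide_eq_true
  rw [isChain_cons_eq_iff_eq_replicate] at hchain
  exact ⟨u, r.length + 1, r.length.succ_pos, by rw [replicate_succ, ← hchain]⟩

theorem isExpansionBy_reduceShortRuns {a : ℝ} (ha : 1 ≤ a) (x : List α) :
    IsExpansionBy (fun k => 0 < k ∧ (k : ℝ) ≤ a) (reduceShortRuns a x) x := by
  conv => arg 3; rw [← flatten_splitBy (fun c d => decide (c = d)) x]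
  refine IsExpansionBy.flatten_map fun r hr => ?_
  obtain ⟨u, m, hm, rfl⟩ := exists_eq_replicate_of_mem_splitBy_eq hr
  rw [length_replicate]
  split_ifs with hma
  · rw [take_replicate, min_eq_left hm]
    exact isExpansionBy_singleton ⟨hm, hma.le⟩
  · exact isExpansionBy_self (P := fun k => 0 < k ∧ (k : ℝ) ≤ a) ⟨one_pos, by exact_mod_cast ha⟩ _

end reduceShortRuns

section corrCost

variable {δ : α → α → ℝ}

theorem corrCost_append {xb₁ yb₁ xb₂ yb₂ : List α} (h : xb₁.length = yb₁.length) :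
    corrCost δ (xb₁ ++ xb₂) (yb₁ ++ yb₂) = corrCost δ xb₁ yb₁ + corrCost δ xb₂ yb₂ := by
  rw [corrCost, zipWith_append h, sum_append, corrCost, corrCost]

theorem corrCost_replicate_length (u : α) (w : List α) :
    corrCost δ (replicate w.length u) w = (w.map (δ u)).sum := by
  rw [corrCost, ← map_const', zipWith_map_left, zipWith_self]

theorem corrCost_nonneg (hδ : ∀ u v, 0 ≤ δ u v) (xb yb : List α) : 0 ≤ corrCost δ xb yb := by
  induction xb generalizing yb with
  | nil => simp [corrCost]
  | cons u xb ih =>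
    cases yb with
    | nil => simp [corrCost]
    | cons v yb => exact add_nonneg (hδ u v) (ih yb)

/-- Pad `w` with `m - 1` copies of its last letter `l`: each added pair costs `δ u l`, which is
at most the cost of the whole block. -/
theorem exists_expansion_replicate_cost_le (hδ : ∀ u v, 0 ≤ δ u v) {a : ℝ} {u : α} {m : ℕ}
    (hm : 0 < m) (hma : (m : ℝ) ≤ a) {w : List α} (hw : w ≠ []) :
    ∃ p q, IsExpansion (replicate m u) p ∧ IsExpansion w q ∧ p.length = q.length ∧
      corrCost δ p q ≤ a * corrCost δ (replicate w.length u) w := by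
  set l := w.getLast hw
  set D := (w.map (δ u)).sum
  have hlD : δ u l ≤ D :=
    single_le_sum (by simpa using fun v _ => hδ u v) _ (mem_map_of_mem (getLast_mem hw))
  have hwlen : 0 < w.length := length_pos_iff.mpr hw
  refine ⟨replicate (w.length + (m - 1)) u, w ++ replicate (m - 1) l,
    isExpansion_replicate hm (by omega), isExpansion_append_replicate_getLast hw _,
    by simp, ?_⟩
  have hcost : corrCost δ (replicate (w.length + (m - 1)) u) (w ++ replicate (m - 1) l) =
      D + (m - 1 : ℕ) * δ u l := by
    rw [show w.length + (m - 1) = (w ++ replicate (m - 1) l).length by simp,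
      corrCost_replicate_length, map_append, sum_append, map_replicate, sum_replicate,
      nsmul_eq_mul]
  have hm1 : (0 : ℝ) ≤ m - 1 := by
    rw [sub_nonneg]
    exact_mod_cast hm
  calc corrCost δ _ _ = D + ((m - 1 : ℕ) : ℝ) * δ u l := hcost
    _ ≤ D + (m - 1) * D := by rw [Nat.cast_pred hm]; gcongr
    _ = m * D := by ring
    _ ≤ a * D := by gcongr; exact (hδ u l).trans hlD
    _ = a * corrCost δ (replicate w.length u) w := by rw [corrCost_replicate_length]

theorem IsExpansionBy.exists_expansion_cost_le (hδ : ∀ u v, 0 ≤ δ u v) {a : ℝ}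
    {x' x xb yb : List α} (hx : IsExpansionBy (fun k => 0 < k ∧ (k : ℝ) ≤ a) x' x)
    (hxb : IsExpansion x' xb) (hlen : xb.length = yb.length) :
    ∃ p q, IsExpansion x p ∧ IsExpansion yb q ∧ p.length = q.length ∧
      corrCost δ p q ≤ a * corrCost δ xb yb := by
  induction x' generalizing x xb yb with
  | nil =>
    obtain rfl := isExpansionBy_nil_iff.mp hx
    obtain rfl := isExpansionBy_nil_iff.mp hxb
    obtain rfl := length_eq_zero_iff.mp hlen.symm
    exact ⟨[], [], hxb, hxb, rfl, by simp [corrCost]⟩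
  | cons u x' ih =>
    obtain ⟨m, x₂, ⟨hm, hma⟩, hx₂, rfl⟩ := isExpansionBy_cons_iff.mp hx
    obtain ⟨k, xb₂, hk, hxb₂, rfl⟩ := isExpansionBy_cons_iff.mp hxb
    obtain ⟨w, yb₂, rfl, rfl⟩ : ∃ w yb₂, yb = w ++ yb₂ ∧ w.length = k :=
      ⟨yb.take k, yb.drop k, (take_append_drop k yb).symm, by simp at hlen ⊢; omega⟩
    have hlen₂ : xb₂.length = yb₂.length := by simpa using hlen
    obtain ⟨p₁, q₁, hp₁, hq₁, hpq₁, hc₁⟩ :=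
      exists_expansion_replicate_cost_le hδ hm hma (ne_nil_of_length_pos hk)
    obtain ⟨p₂, q₂, hp₂, hq₂, hpq₂, hc₂⟩ := ih hx₂ hxb₂ hlen₂
    refine ⟨p₁ ++ p₂, q₁ ++ q₂, hp₁.append hp₂, hq₁.append hq₂, by simp [hpq₁, hpq₂], ?_⟩
    rw [corrCost_append hpq₁, corrCost_append length_replicate, mul_add]
    exact add_le_add hc₁ hc₂

theorem IsCorrespondence.exists_cost_le_of_isExpansionBy (hδ : ∀ u v, 0 ≤ δ u v) {a : ℝ}
    {x' x y xb yb : List α} (hx : IsExpansionBy (fun k => 0 < k ∧ (k : ℝ) ≤ a) x' x)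
    (h : IsCorrespondence x' y xb yb) :
    ∃ p q, IsCorrespondence x y p q ∧ corrCost δ p q ≤ a * corrCost δ xb yb :=
  let ⟨p, q, hp, hq, hpq, hcost⟩ := hx.exists_expansion_cost_le hδ h.1 h.2.2
  ⟨p, q, ⟨hp, h.2.1.trans hq, hpq⟩, hcost⟩

end corrCost

section dtw

variable {δ : α → α → ℝ} {x y x' y' : List α}

theorem dtw_le_mul_dtw (hδ : ∀ u v, 0 ≤ δ u v) {c : ℝ} (hc : 0 ≤ c)
    (hne : ∃ xb yb, IsCorrespondence x' y' xb yb)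
    (h : ∀ xb yb, IsCorrespondence x' y' xb yb →
      ∃ p q, IsCorrespondence x y p q ∧ corrCost δ p q ≤ c * corrCost δ xb yb) :
    dtw δ x y ≤ c * dtw δ x' y' := by
  obtain ⟨xb, yb, hxy⟩ := hne
  have hbdd : BddBelow {c | ∃ xb yb, IsCorrespondence x y xb yb ∧ c = corrCost δ xb yb} :=
    ⟨0, by rintro _ ⟨xb, yb, -, rfl⟩; exact corrCost_nonneg hδ xb yb⟩
  rw [dtw, dtw, ← smul_eq_mul, ← Real.sInf_smul_of_nonneg hc]
  refine le_csInf ⟨_, Set.smul_mem_smul_set ⟨xb, yb, hxy, rfl⟩⟩ ?_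
  rintro _ ⟨_, ⟨xb, yb, hxy, rfl⟩, rfl⟩
  obtain ⟨p, q, hpq, hcost⟩ := h xb yb hxy
  exact (csInf_le hbdd ⟨p, q, hpq, rfl⟩).trans hcost

theorem dtw_eq_zero_of_forall_not_isCorrespondence
    (h : ∀ xb yb, ¬IsCorrespondence x y xb yb) : dtw δ x y = 0 := by
  simp [dtw, h]

end dtw

end

theorem dtw_reduceShortRuns_general {α : Type*} [MetricSpace α] [DecidableEq α] (a : ℝ)
    (ha : 1 ≤ a) (x y : List α) :
    dtw dist (reduceShortRuns a x) y ≤ dtw dist x y ∧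
      dtw dist x y ≤ a * dtw dist (reduceShortRuns a x) y := by
  have hdist : ∀ u v : α, 0 ≤ dist u v := fun _ _ => dist_nonneg
  have hx := isExpansionBy_reduceShortRuns ha x
  have hdown : ∀ xb yb, IsCorrespondence x y xb yb →
      IsCorrespondence (reduceShortRuns a x) y xb yb :=
    fun _ _ h => h.of_isExpansion_left (hx.mono fun _ hk => hk.1)
  have hup := fun xb yb (h : IsCorrespondence (reduceShortRuns a x) y xb yb) =>
    h.exists_cost_le_of_isExpansionBy hdist hx
  by_cases hne : ∃ xb yb, IsCorrespondence (reduceShortRuns a x) y xb yb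
  · obtain ⟨xb, yb, hxy⟩ := hne
    obtain ⟨p, q, hpq, -⟩ := hup xb yb hxy
    refine ⟨?_, dtw_le_mul_dtw hdist (by linarith) ⟨xb, yb, hxy⟩ hup⟩
    simpa using dtw_le_mul_dtw hdist zero_le_one ⟨p, q, hpq⟩
      fun xb yb h => ⟨xb, yb, hdown xb yb h, (one_mul _).ge⟩
  · simp only [not_exists] at hne
    rw [dtw_eq_zero_of_forall_not_isCorrespondence hne,
      dtw_eq_zero_of_forall_not_isCorrespondence fun xb yb h => hne xb yb (hdown xb yb h)]
    simp

/-- dtw(x', y) ≤ dtw(x, y) ≤ α · dtw(x', y) where x' reduces runs of length < α. -/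
theorem dtw_reduceShortRuns {α : Type*} [MetricSpace α] [DecidableEq α] (n : ℕ) (a : ℝ)
    (ha : 1 ≤ a) (x y : List α) (hx : x.length ≤ n) (hy : y.length ≤ n) :
    dtw dist (reduceShortRuns a x) y ≤ dtw dist x y ∧
      dtw dist x y ≤ a * dtw dist (reduceShortRuns a x) y :=
  dtw_reduceShortRuns_general a ha x y
end

section
/- Let Σ be a finite set equipped with the generalized Hamming metric (distinct points have distance 1). Let S ⊆ Σ be a set of size k, let x be the concatenation of the elements of S in some order (a string of length k), and let y be the string consisting of a single character a ∈ Σ repeated n times, where n ≥ k ≥ 1. If a ∈ S, then dtw(x, y) = k − 1, and if a ∉ S, then dtw(x, y) = n. -/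
/-! Every expansion of the constant string aⁿ is a constant string aᵐ with m ≥ n, against which
an expansion of `x` of length m costs its number of letters different from a. So dtw0 x aⁿ is the
least such count over expansions of `x` of length at least n. Each letter of `x` other than a
survives in every expansion, which bounds the count below by k − 1 when a ∈ S and by the whole
length, at least n, when a ∉ S; stretching one letter of `x` (a itself when a ∈ S) to reach
length exactly n attains the bound. -/

section Expansion

variable {α : Type*}

@[simp]
theorem isExpansion_nil_left {xb : List α} : IsExpansion [] xb ↔ xb = [] := by
  simp [IsExpansion]

theorem isExpansion_cons_left {c : α} {t xb : List α} :
    IsExpansion (c :: t) xb ↔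
      ∃ r, 0 < r ∧ ∃ tb, IsExpansion t tb ∧ xb = List.replicate r c ++ tb := by
  constructor
  · rintro ⟨_ | ⟨r, ks⟩, hlen, hpos, rfl⟩
    · simp at hlen
    · exact ⟨r, hpos r (by simp), _, ⟨ks, by simpa using hlen,
        fun k hk => hpos k (List.mem_cons_of_mem _ hk), rfl⟩, rfl⟩
  · rintro ⟨r, hr, tb, ⟨ks, hlen, hpos, rfl⟩, rfl⟩
    refine ⟨r :: ks, by simpa using hlen, ?_, rfl⟩
    rintro k (_ | ⟨_, hk⟩)
    exacts [hr, hpos k hk]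

theorem IsExpansion.refl (x : List α) : IsExpansion x x := by
  induction x with
  | nil => simp
  | cons c t ih => exact isExpansion_cons_left.2 ⟨1, one_pos, t, ih, rfl⟩

theorem IsExpansion.append_s13 {x y xb yb : List α} (hx : IsExpansion x xb)
    (hy : IsExpansion y yb) : IsExpansion (x ++ y) (xb ++ yb) := by
  induction x generalizing xb with
  | nil =>
    obtain rfl := isExpansion_nil_left.1 hx
    exact hy
  | cons c t ih =>
    obtain ⟨r, hr, tb, ht, rfl⟩ := isExpansion_cons_left.1 hx
    exact isExpansion_cons_left.2 ⟨r, hr, tb ++ yb, ih ht, by simp⟩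

theorem isExpansion_stretch (u v : List α) (c : α) {r : ℕ} (hr : 0 < r) :
    IsExpansion (u ++ c :: v) (u ++ List.replicate r c ++ v) := by
  rw [List.append_assoc]
  exact (IsExpansion.refl u).append_s13 (isExpansion_cons_left.2 ⟨r, hr, v, .refl v, rfl⟩)

theorem IsExpansion.mem_iff {x xb : List α} (h : IsExpansion x xb) {b : α} :
    b ∈ xb ↔ b ∈ x := by
  induction x generalizing xb with
  | nil => simp_all
  | cons c t ih =>
    obtain ⟨r, hr, tb, ht, rfl⟩ := isExpansion_cons_left.1 h
    simp [ih ht, List.mem_replicate, hr.ne']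

theorem IsExpansion.length_le {x xb : List α} (h : IsExpansion x xb) :
    x.length ≤ xb.length := by
  induction x generalizing xb with
  | nil => simp
  | cons c t ih =>
    obtain ⟨r, hr, tb, ht, rfl⟩ := isExpansion_cons_left.1 h
    have := ih ht
    simp only [List.length_cons, List.length_append, List.length_replicate]
    omega

theorem IsExpansion.eq_replicate {n : ℕ} {a : α} {yb : List α}
    (h : IsExpansion (List.replicate n a) yb) : ∃ m, n ≤ m ∧ yb = List.replicate m a :=
  ⟨yb.length, by simpa using h.length_le,
    List.eq_replicate_iff.2 ⟨rfl, fun b hb => (List.mem_replicate.1 (h.mem_iff.1 hb)).2⟩⟩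

end Expansion

section Hamming

variable {α : Type*} [DecidableEq α]

theorem corrCost_hamDist_replicate (xb : List α) (a : α) :
    corrCost hamDist xb (List.replicate xb.length a) = xb.countP (· ≠ a) := by
  induction xb with
  | nil => simp [corrCost]
  | cons b t ih =>
    simp only [corrCost, List.length_cons, List.replicate_succ, List.zipWith_cons_cons,
      List.sum_cons, List.countP_cons] at ih ⊢
    rw [ih]
    by_cases hb : b = a <;> simp [hamDist, hb, add_comm]

theorem dtw0_replicate_eq {x : List α} {a : α} {n c : ℕ}
    (hle : ∀ xb, IsExpansion x xb → n ≤ xb.length → c ≤ xb.countP (· ≠ a))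
    (hex : ∃ xb, IsExpansion x xb ∧ xb.length = n ∧ xb.countP (· ≠ a) = c) :
    dtw0 x (List.replicate n a) = c := by
  refine IsLeast.csInf_eq ⟨?_, ?_⟩
  · obtain ⟨xb, hx, rfl, hc⟩ := hex
    exact ⟨xb, _, ⟨hx, .refl _, by simp⟩, by rw [corrCost_hamDist_replicate, hc]⟩
  · rintro _ ⟨xb, yb, ⟨hx, hy, hlen⟩, rfl⟩
    obtain ⟨m, hm, rfl⟩ := hy.eq_replicate
    rw [List.length_replicate] at hlen
    rw [← hlen, corrCost_hamDist_replicate]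
    exact_mod_cast hle xb hx (hlen ▸ hm)

theorem IsExpansion.card_toFinset_erase_le_countP_ne {x xb : List α} (h : IsExpansion x xb)
    (a : α) : (x.toFinset.erase a).card ≤ xb.countP (· ≠ a) := by
  rw [List.countP_eq_length_filter]
  refine (Finset.card_le_card fun b hb => ?_).trans (List.toFinset_card_le _)
  rw [Finset.mem_erase, List.mem_toFinset] at hb
  simpa [List.mem_filter, h.mem_iff] using hb.symm

theorem IsExpansion.countP_ne_eq_length {x xb : List α} (h : IsExpansion x xb) {a : α}
    (ha : a ∉ x) : xb.countP (· ≠ a) = xb.length :=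
  List.countP_eq_length.2 fun b hb => by
    simpa using fun hba : b = a => ha (hba ▸ h.mem_iff.1 hb)

theorem List.Nodup.countP_ne_of_mem {x : List α} (hnd : x.Nodup) {a : α} (ha : a ∈ x) :
    x.countP (· ≠ a) = x.length - 1 := by
  have hsplit := x.length_eq_countP_add_countP (· = a)
  have hone : x.countP (· = a) = 1 := List.count_eq_one_of_mem hnd ha
  simp only [decide_not, decide_eq_true_eq] at hsplit hone ⊢
  omega

theorem exists_isExpansion_stretch {x : List α} {c : α} (hc : c ∈ x) {n : ℕ}
    (hn : x.length ≤ n) :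
    ∃ xb, IsExpansion x xb ∧ xb.length = n ∧ xb.countP (· ≠ c) = x.countP (· ≠ c) := by
  obtain ⟨u, v, rfl⟩ := List.append_of_mem hc
  refine ⟨u ++ List.replicate (n - (u.length + v.length)) c ++ v,
    isExpansion_stretch u v c (by simp at hn; omega), by simp at hn ⊢; omega, ?_⟩
  simp [List.countP_append, List.countP_replicate]

end Hamming

/-- DTW over generalized Hamming space between the concatenation of a k-element set S
and the n-fold repetition of a character a equals k−1 if a ∈ S and n if a ∉ S. -/
theorem dtw0_set_vs_repeat {σ : Type*} [DecidableEq σ] (S : Finset σ) (k n : ℕ)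
    (hk : 1 ≤ k) (hkn : k ≤ n) (hS : S.card = k)
    (x : List σ) (hnd : x.Nodup) (hxS : x.toFinset = S) (a : σ) :
    (a ∈ S → dtw0 x (List.replicate n a) = (k : ℝ) - 1) ∧
      (a ∉ S → dtw0 x (List.replicate n a) = (n : ℝ)) := by
  have hxlen : x.length = k := by rw [← hS, ← hxS, List.toFinset_card_of_nodup hnd]
  subst hxS
  simp only [List.mem_toFinset]
  constructor
  · intro ha
    have hcard : (x.toFinset.erase a).card = k - 1 := by
      rw [Finset.card_erase_of_mem (List.mem_toFinset.2 ha), hS]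
    rw [← Nat.cast_one, ← Nat.cast_sub hk]
    refine dtw0_replicate_eq (fun xb hx _ => hcard ▸ hx.card_toFinset_erase_le_countP_ne a) ?_
    obtain ⟨xb, hx, hlen, hcount⟩ := exists_isExpansion_stretch ha (hxlen.trans_le hkn)
    exact ⟨xb, hx, hlen, by rw [hcount, hnd.countP_ne_of_mem ha, hxlen]⟩
  · intro ha
    obtain ⟨c, hc⟩ := List.exists_mem_of_length_pos (hxlen ▸ hk : 0 < x.length)
    obtain ⟨xb, hx, hlen, -⟩ := exists_isExpansion_stretch hc (hxlen.trans_le hkn)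
    refine dtw0_replicate_eq (fun xb hx hn => ?_) ⟨xb, hx, hlen, ?_⟩
    · rwa [hx.countP_ne_eq_length ha]
    · rw [hx.countP_ne_eq_length ha, hlen]
end
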